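/- (Backward preservation of the write rule.) Let vs : ℕ → var, let cs be a constraint set, let x be a variable fresh for both vs and cs, let d : ℕ, e : SExp, and set vs' := vs[d ↦ x] and cs' := cs ∪ {var x = e^vs}. If an assignment asgn satisfies cs' and vs'^asgn ≡ s' for some memory s' : ℕ → ℤ, then asgn satisfies cs, and there exists a memory s : ℕ → ℤ (namely s := fun k => asgn (vs k)) such that vs^asgn ≡ s and s' = s[d ↦ e^s]. -/
import Mathlib


/-- Variables are natural numbers. -/
abbrev Var := ℕ

/-- Binary integer operations: +, −, ×, ÷ (integer division). -/
inductive Op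
  | add | sub | mul | div
deriving DecidableEq

def Op.denote : Op → ℤ → ℤ → ℤ
  | .add => (· + ·)
  | .sub => (· - ·)
  | .mul => (· * ·)
  | .div => (· / ·)

/-- Symbolic server expressions. -/
inductive SExp
  | const : ℤ → SExp
  | read : ℕ → SExp
  | bin : Op → SExp → SExp → SExp
deriving DecidableEq

/-- Evaluation of a server expression on a memory `s : ℕ → ℤ`, written `e^s`. -/
def SExp.eval (s : ℕ → ℤ) : SExp → ℤ
  | .const z => z
  | .read k => s k
  | .bin op e₁ e₂ => op.denote (e₁.eval s) (e₂.eval s)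

/-- Validator expressions. -/
inductive VExp
  | const : ℤ → VExp
  | var : Var → VExp
  | bin : Op → VExp → VExp → VExp
deriving DecidableEq

/-- Evaluation of a validator expression under an assignment, written `e^asgn`. -/
def VExp.eval (asgn : Var → ℤ) : VExp → ℤ
  | .const z => z
  | .var x => asgn x
  | .bin op e₁ e₂ => op.denote (e₁.eval asgn) (e₂.eval asgn)

/-- Symbolization `e^vs` of a server expression: replace every `read src` by `var (vs src)`. -/
def SExp.symb (vs : ℕ → Var) : SExp → VExp
  | .const z => .const z
  | .read k => .var (vs k)
  | .bin op e₁ e₂ => .bin op (e₁.symb vs) (e₂.symb vs)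

/-- Comparison operators for constraints: <, ≤, =. -/
inductive Cmp
  | lt | le | eq
deriving DecidableEq

def Cmp.holds : Cmp → ℤ → ℤ → Prop
  | .lt => (· < ·)
  | .le => (· ≤ ·)
  | .eq => (· = ·)

/-- A constraint is a triple of two validator expressions and a comparison. -/
structure Constraint where
  lhs : VExp
  cmp : Cmp
  rhs : VExp
deriving DecidableEq

/-- `asgn` satisfies the constraint set `cs`. -/
def Sat (asgn : Var → ℤ) (cs : Finset Constraint) : Prop :=
  ∀ c ∈ cs, c.cmp.holds (c.lhs.eval asgn) (c.rhs.eval asgn)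

/-- A variable occurs in a validator expression. -/
def VExp.occurs (x : Var) : VExp → Prop
  | .const _ => False
  | .var y => y = x
  | .bin _ e₁ e₂ => e₁.occurs x ∨ e₂.occurs x

/-- `x` is fresh for the constraint set `cs`: it occurs in no constraint of `cs`. -/
def FreshCs (x : Var) (cs : Finset Constraint) : Prop :=
  ∀ c ∈ cs, ¬ c.lhs.occurs x ∧ ¬ c.rhs.occurs x

/-- `x` is fresh for `vs : ℕ → Var`. -/
def FreshVs (x : Var) (vs : ℕ → Var) : Prop :=
  ∀ k : ℕ, vs k ≠ x

lemma symb_eval (vs : ℕ → Var) (asgn : Var → ℤ) (e : SExp) :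
    (e.symb vs).eval asgn = e.eval (fun k => asgn (vs k)) := by
  induction e with
  | const z => rfl
  | read k => rfl
  | bin op e₁ e₂ ih₁ ih₂ => simp [SExp.symb, SExp.eval, VExp.eval, ih₁, ih₂]

/-- Backward preservation of the write rule. -/
theorem write_backward_preservation
    (vs : ℕ → Var) (cs : Finset Constraint)
    (x : Var) (hxvs : FreshVs x vs) (hxcs : FreshCs x cs)
    (d : ℕ) (e : SExp) (asgn : Var → ℤ) (s' : ℕ → ℤ)
    (hsat : Sat asgn (insert ⟨VExp.var x, Cmp.eq, e.symb vs⟩ cs))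
    (hrefl : ∀ k : ℕ, asgn (Function.update vs d x k) = s' k) :
    Sat asgn cs ∧
    ∃ s : ℕ → ℤ, (∀ k : ℕ, asgn (vs k) = s k) ∧
      s' = Function.update s d (e.eval s) := by
  have hsatcs : Sat asgn cs := fun c hc => hsat c (Finset.mem_insert_of_mem hc)
  have hx : asgn x = (e.symb vs).eval asgn :=
    hsat _ (Finset.mem_insert_self _ _)
  refine ⟨hsatcs, fun k => asgn (vs k), fun k => rfl, ?_⟩
  funext k
  by_cases hk : k = d
  · subst hk
    rw [Function.update_self, ← symb_eval, ← hx, ← hrefl k, Function.update_self]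
  · rw [Function.update_of_ne hk, ← hrefl k, Function.update_of_ne hk]
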